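/- arXiv:math/0004165 — 5 statements merged into one kernel-verified Lean document; each statement's English description precedes it below -/
import Mathlib

section
/- For any N ≥ 1, d_q^N η = (1−q)(1−q^2)⋯(1−q^N) η^{N+1}. In particular, if q^N = 1 then d_q^N η = 0. -/
/-- The `q`-differential of a homogeneous element `B` of degree `b`:
`d_q B = η B - q^b B η`. -/
noncomputable def dq {A : Type*} [Ring A] [Algebra ℂ A] (q : ℂ) (η : A) (b : ℕ) (B : A) : A :=
  η * B - q ^ b • (B * η)

/-- Iterated `q`-differential `d_q^n` applied to an element of degree `b`
(each application raises the degree by one). -/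
noncomputable def dqPow {A : Type*} [Ring A] [Algebra ℂ A] (q : ℂ) (η : A) (b : ℕ) :
    ℕ → A → A
  | 0, B => B
  | n + 1, B => dq q η (b + n) (dqPow q η b n B)

section

variable {A : Type*} [Ring A] [Algebra ℂ A] (q : ℂ) (η : A)

theorem dq_smul (b : ℕ) (c : ℂ) (B : A) : dq q η b (c • B) = c • dq q η b B := by
  rw [dq, dq, smul_sub, mul_smul_comm, smul_mul_assoc, smul_comm]

theorem dq_pow_self (b n : ℕ) : dq q η b (η ^ n) = (1 - q ^ b) • η ^ (n + 1) := by
  rw [dq, ← pow_succ', ← pow_succ, sub_smul, one_smul]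

theorem dqPow_pow_self (b m N : ℕ) :
    dqPow q η b N (η ^ m) = (∏ k ∈ Finset.Ico b (b + N), (1 - q ^ k)) • η ^ (m + N) := by
  induction N with
  | zero => simp [dqPow]
  | succ n ih =>
    rw [dqPow, ih, dq_smul, dq_pow_self, smul_smul, ← add_assoc,
      Finset.prod_Ico_succ_top (Nat.le_add_right b n), add_assoc m]

end

/-- for any `N ≥ 1`, `d_q^N η = (1−q)(1−q^2)⋯(1−q^N) η^{N+1}`
(`η` has degree `1`); in particular `q^N = 1` implies `d_q^N η = 0`. -/
theorem dqPow_eta {A : Type*} [Ring A] [Algebra ℂ A]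
    (q : ℂ) (η : A) (N : ℕ) (hN : 1 ≤ N) :
    dqPow q η 1 N η = (∏ k ∈ Finset.Icc 1 N, (1 - q ^ k)) • η ^ (N + 1) ∧
      (q ^ N = 1 → dqPow q η 1 N η = 0) := by
  have formula : dqPow q η 1 N η = (∏ k ∈ Finset.Icc 1 N, (1 - q ^ k)) • η ^ (N + 1) := by
    simpa [add_comm 1 N, Finset.Ico_add_one_right_eq_Icc] using dqPow_pow_self q η 1 1 N
  refine ⟨formula, fun hq => ?_⟩
  have last_factor_zero : 1 - q ^ N = 0 := by rw [hq, sub_self]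
  rw [formula, Finset.prod_eq_zero (Finset.right_mem_Icc.mpr hN) last_factor_zero, zero_smul]
end

section
/- Define the covariant differential D Φ = d Φ + A Φ where A is a degree-1 element and d satisfies the q-graded Leibniz rule d(ωφ) = (dω)φ + q^{deg ω} ω dφ. Then for all N ≥ 1, D^N Φ = d^N Φ + Σ_{k=1}^{N−1} [N choose k]_q (D^{k−1} A) d^{N−k} Φ + (D^{N−1} A) Φ. -/
noncomputable def qbinom (q : ℂ) : ℕ → ℕ → ℂ
  | _, 0 => 1
  | 0, _ + 1 => 0
  | n + 1, k + 1 => q ^ (k + 1) * qbinom q n (k + 1) + qbinom q n k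

lemma qbinom_zero_right (q : ℂ) (n : ℕ) : qbinom q n 0 = 1 := by
  cases n <;> rfl

lemma qbinom_eq_zero (q : ℂ) : ∀ n k, n < k → qbinom q n k = 0 := by
  intro n
  induction n with
  | zero =>
    intro k hk
    match k, hk with
    | k + 1, _ => rfl
  | succ n ih =>
    intro k hk
    match k, hk with
    | k + 1, hk =>
      show q ^ (k + 1) * qbinom q n (k + 1) + qbinom q n k = 0
      rw [ih (k + 1) (by omega), ih k (by omega)]
      ring

lemma qbinom_self (q : ℂ) : ∀ n, qbinom q n n = 1 := by
  intro n
  induction n with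
  | zero => rfl
  | succ n ih =>
    show q ^ (n + 1) * qbinom q n (n + 1) + qbinom q n n = 1
    rw [qbinom_eq_zero q n (n + 1) (by omega), ih]
    ring

lemma qbinom_succ_succ (q : ℂ) (n k : ℕ) :
    qbinom q (n + 1) (k + 1) = q ^ (k + 1) * qbinom q n (k + 1) + qbinom q n k := rfl

/-- let a graded algebra `𝒜` (grading given by the sets `G p`) act on a
module `H`, let `d` be a degree-raising linear operator satisfying the `q`-graded Leibniz
rule (both on the algebra and on the module), let `A` be a degree-1 element (the
connection one-form), and let `D Φ = d Φ + A Φ` (resp. `D X = d X + A X` on the algebra)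
be the covariant differential.  Then for all `N ≥ 1`:
`D^N Φ = d^N Φ + Σ_{k=1}^{N−1} [N choose k]_q (D^{k−1} A) d^{N−k} Φ + (D^{N−1} A) Φ`. -/
theorem covariant_power_formula
    (q : ℂ) (𝒜 : Type*) [Ring 𝒜] [Algebra ℂ 𝒜]
    (H : Type*) [AddCommGroup H] [Module ℂ H] [Module 𝒜 H] [IsScalarTower ℂ 𝒜 H]
    -- the grading of 𝒜
    (G : ℕ → Set 𝒜)
    (hGadd : ∀ p, ∀ X ∈ G p, ∀ Y ∈ G p, X + Y ∈ G p)
    (hGmul : ∀ p r, ∀ X ∈ G p, ∀ Y ∈ G r, X * Y ∈ G (p + r))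
    -- the q-differential on the algebra and on the module
    (dA : 𝒜 →ₗ[ℂ] 𝒜) (hdeg : ∀ p, ∀ X ∈ G p, dA X ∈ G (p + 1))
    (dH : H →ₗ[ℂ] H)
    (hLeibA : ∀ p, ∀ X ∈ G p, ∀ Y : 𝒜, dA (X * Y) = dA X * Y + q ^ p • (X * dA Y))
    (hLeibH : ∀ p, ∀ X ∈ G p, ∀ Φ : H, dH (X • Φ) = dA X • Φ + q ^ p • (X • dH Φ))
    -- the connection one-form and the covariant differentials
    (Acon : 𝒜) (hA : Acon ∈ G 1)
    (D : H → H) (hD : ∀ Φ, D Φ = dH Φ + Acon • Φ)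
    (DA : 𝒜 → 𝒜) (hDA : ∀ X, DA X = dA X + Acon * X)
    (N : ℕ) (hN : 1 ≤ N) (Φ : H) :
    D^[N] Φ = (⇑dH)^[N] Φ
      + ∑ k ∈ Finset.Icc 1 (N - 1),
          qbinom q N k • ((DA^[k - 1] Acon) • (⇑dH)^[N - k] Φ)
      + (DA^[N - 1] Acon) • Φ := by
  -- degree of iterated covariant derivatives of the connection form
  have Bdeg : ∀ k, DA^[k] Acon ∈ G (k + 1) := by
    intro k
    induction k with
    | zero => simpa using hA
    | succ k ih =>
      rw [Function.iterate_succ_apply', hDA]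
      refine hGadd _ _ (hdeg _ _ ih) _ ?_
      have := hGmul 1 (k + 1) Acon hA _ ih
      rwa [Nat.add_comm] at this
  -- key uniform formula
  have key : ∀ M : ℕ, D^[M + 1] Φ = (⇑dH)^[M + 1] Φ
      + ∑ k ∈ Finset.range (M + 1),
          qbinom q (M + 1) (k + 1) • ((DA^[k] Acon) • (⇑dH)^[M - k] Φ) := by
    intro M
    induction M with
    | zero =>
      simp [hD, qbinom_self]
    | succ M ih =>
      rw [Function.iterate_succ_apply' D (M + 1), ih, hD]
      rw [map_add, smul_add, map_sum, Finset.smul_sum]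
      have e1 : dH ((⇑dH)^[M + 1] Φ) = (⇑dH)^[M + 2] Φ :=
        (Function.iterate_succ_apply' (⇑dH) (M + 1) Φ).symm
      rw [e1, add_add_add_comm, ← Finset.sum_add_distrib]
      -- termwise identity on the left
      have step : ∀ k ∈ Finset.range (M + 1),
          dH (qbinom q (M + 1) (k + 1) • ((DA^[k] Acon) • (⇑dH)^[M - k] Φ))
            + Acon • (qbinom q (M + 1) (k + 1) • ((DA^[k] Acon) • (⇑dH)^[M - k] Φ))
          = qbinom q (M + 1) (k + 1) • ((DA^[k + 1] Acon) • (⇑dH)^[M - k] Φ)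
            + (q ^ (k + 1) * qbinom q (M + 1) (k + 1)) •
                ((DA^[k] Acon) • (⇑dH)^[M + 1 - k] Φ) := by
        intro k hk
        have hk' : k ≤ M := Nat.lt_succ_iff.mp (Finset.mem_range.mp hk)
        have hB : (DA^[k + 1] Acon : 𝒜)
            = dA (DA^[k] Acon) + Acon * (DA^[k] Acon) := by
          rw [Function.iterate_succ_apply', hDA]
        have hiter : dH ((⇑dH)^[M - k] Φ) = (⇑dH)^[M + 1 - k] Φ := by
          rw [← Function.iterate_succ_apply' (⇑dH) (M - k) Φ]
          congr 1
          omega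
        rw [map_smul, hLeibH (k + 1) _ (Bdeg k), hiter, hB, add_smul,
          smul_comm Acon (qbinom q (M + 1) (k + 1)), ← mul_smul Acon]
        simp only [smul_add, smul_smul]
        rw [mul_comm (qbinom q (M + 1) (k + 1)) (q ^ (k + 1))]
        abel
      rw [Finset.sum_congr rfl step, Finset.sum_add_distrib]
      -- now massage the right-hand side
      have hrhs : ∀ k ∈ Finset.range (M + 1 + 1),
          qbinom q (M + 1 + 1) (k + 1) • ((DA^[k] Acon) • (⇑dH)^[M + 1 - k] Φ)
          = (q ^ (k + 1) * qbinom q (M + 1) (k + 1)) •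
                ((DA^[k] Acon) • (⇑dH)^[M + 1 - k] Φ)
            + qbinom q (M + 1) k • ((DA^[k] Acon) • (⇑dH)^[M + 1 - k] Φ) := by
        intro k _
        rw [qbinom_succ_succ, add_smul]
      rw [Finset.sum_congr rfl hrhs, Finset.sum_add_distrib]
      -- first sum: drop the vanishing top term
      rw [Finset.sum_range_succ (fun k => (q ^ (k + 1) * qbinom q (M + 1) (k + 1)) •
            ((DA^[k] Acon) • (⇑dH)^[M + 1 - k] Φ)) (M + 1)]
      rw [qbinom_eq_zero q (M + 1) (M + 2) (by omega), mul_zero, zero_smul, add_zero]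
      -- second sum: peel off the bottom term
      rw [Finset.sum_range_succ' (fun k => qbinom q (M + 1) k •
            ((DA^[k] Acon) • (⇑dH)^[M + 1 - k] Φ)) (M + 1)]
      simp only [Function.iterate_zero_apply, qbinom_zero_right, one_smul,
        Nat.sub_zero, Nat.succ_sub_succ]
      abel
  obtain ⟨M, rfl⟩ : ∃ M, N = M + 1 := ⟨N - 1, by omega⟩
  rw [key M]
  simp only [Nat.add_sub_cancel]
  rw [Finset.sum_range_succ, qbinom_self, Nat.sub_self, Function.iterate_zero_apply,
    one_smul, ← Finset.Ico_add_one_right_eq_Icc, Finset.sum_Ico_eq_sum_range]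
  simp only [Nat.add_sub_cancel]
  have : ∀ i ∈ Finset.range M,
      qbinom q (M + 1) (1 + i) • ((DA^[1 + i - 1] Acon) • (⇑dH)^[M + 1 - (1 + i)] Φ)
      = qbinom q (M + 1) (i + 1) • ((DA^[i] Acon) • (⇑dH)^[M - i] Φ) := by
    intro i _
    rw [show 1 + i = i + 1 by omega]
    simp [Nat.succ_sub_succ]
  rw [Finset.sum_congr rfl this, add_assoc]
end

section
/- If q is a primitive N-th root of unity (so that d^N = 0 and [N choose k]_q = 0 for 0 < k < N), then the N-th power of the covariant differential reduces to multiplication by the curvature: D^N Φ = (D^{N−1} A) Φ for all Φ. -/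
open Finset

/-!
On the module, the covariant differential `D = d + A` satisfies the twisted commutation rule
`D ∘ (D^{k-1} A) = D^k A + q^k (D^{k-1} A) ∘ d`, exactly the rule that yields the
`q`-binomial expansion `D^n = ∑_{i+j=n} [n, i]_q (D^{i-1} A) d^j` in `End H`. At a primitive
`N`-th root of unity the Gaussian binomials `[N, i]_q` with `0 < i < N` vanish, because
`[N, i]_q (q;q)_i (q;q)_{N-i} = (q;q)_N = 0` while `(q;q)_m ≠ 0` for `m < N`; and `d^N = 0`
kills the term `i = 0`, leaving `D^{N-1} A`.
-/

section QBinomial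

variable {R : Type*}

section CommSemiring

variable [CommSemiring R] (q : R)

def qBinomial : ℕ → ℕ → R
  | _, 0 => 1
  | 0, _ + 1 => 0
  | n + 1, k + 1 => qBinomial n k + q ^ (k + 1) * qBinomial n (k + 1)

@[simp]
theorem qBinomial_zero_right (n : ℕ) : qBinomial q n 0 = 1 := by
  cases n <;> rfl

theorem qBinomial_succ_succ (n k : ℕ) :
    qBinomial q (n + 1) (k + 1) = qBinomial q n k + q ^ (k + 1) * qBinomial q n (k + 1) :=
  rfl

theorem qBinomial_eq_zero_of_lt : ∀ {n k : ℕ}, n < k → qBinomial q n k = 0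
  | 0, _ + 1, _ => rfl
  | n + 1, k + 1, h => by
    rw [qBinomial_succ_succ, qBinomial_eq_zero_of_lt (by omega),
      qBinomial_eq_zero_of_lt (by omega), mul_zero, add_zero]

@[simp]
theorem qBinomial_self : ∀ n, qBinomial q n n = 1
  | 0 => rfl
  | n + 1 => by
    rw [qBinomial_succ_succ, qBinomial_self n, qBinomial_eq_zero_of_lt q n.lt_succ_self,
      mul_zero, add_zero]

end CommSemiring

section CommRing

variable [CommRing R] (q : R)

def qPochhammer (n : ℕ) : R := ∏ i ∈ range n, (1 - q ^ (i + 1))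

theorem qPochhammer_succ (n : ℕ) : qPochhammer q (n + 1) = qPochhammer q n * (1 - q ^ (n + 1)) :=
  prod_range_succ _ n

theorem qBinomial_add_mul_qPochhammer : ∀ k m : ℕ,
    qBinomial q (k + m) k * (qPochhammer q k * qPochhammer q m) = qPochhammer q (k + m)
  | 0, m => by simp [qPochhammer]
  | k + 1, 0 => by simp [qPochhammer]
  | k + 1, m + 1 => by
    have h₁ := qBinomial_add_mul_qPochhammer k (m + 1)
    have h₂ := qBinomial_add_mul_qPochhammer (k + 1) m
    rw [show k + 1 + (m + 1) = k + m + 1 + 1 by omega, qBinomial_succ_succ, qPochhammer_succ,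
      qPochhammer_succ, qPochhammer_succ q (k + m + 1)]
    rw [show k + (m + 1) = k + m + 1 by omega, qPochhammer_succ q m] at h₁
    rw [show k + 1 + m = k + m + 1 by omega, qPochhammer_succ] at h₂
    linear_combination (1 - q ^ (k + 1)) * h₁ + q ^ (k + 1) * (1 - q ^ (m + 1)) * h₂

variable {q} {N : ℕ}

theorem IsPrimitiveRoot.qPochhammer_ne_zero [IsDomain R] (hq : IsPrimitiveRoot q N) {m : ℕ}
    (hm : m < N) : qPochhammer q m ≠ 0 :=
  prod_ne_zero_iff.mpr fun i hi =>
    sub_ne_zero.mpr (hq.pow_ne_one_of_pos_of_lt i.succ_ne_zero (by simp at hi; omega)).symm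

theorem IsPrimitiveRoot.qPochhammer_self (hq : IsPrimitiveRoot q N) (hN : N ≠ 0) :
    qPochhammer q N = 0 := by
  obtain ⟨M, rfl⟩ := Nat.exists_eq_add_one_of_ne_zero hN
  rw [qPochhammer_succ, hq.pow_eq_one, sub_self, mul_zero]

theorem IsPrimitiveRoot.qBinomial_eq_zero [IsDomain R] (hq : IsPrimitiveRoot q N) {k : ℕ}
    (hk₀ : 0 < k) (hkN : k < N) : qBinomial q N k = 0 := by
  obtain ⟨m, rfl⟩ := Nat.exists_eq_add_of_lt hkN
  have h := qBinomial_add_mul_qPochhammer q k (m + 1)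
  rw [← add_assoc, hq.qPochhammer_self (by omega)] at h
  simpa [hq.qPochhammer_ne_zero hkN, hq.qPochhammer_ne_zero (show m + 1 < k + m + 1 by omega)]
    using h

end CommRing

end QBinomial

section TwistedBinomial

variable {R M : Type*} [CommSemiring R] [Semiring M] [Algebra R M]
  {q : R} {D d : M} {E : ℕ → M}

theorem pow_eq_sum_qBinomial_of_mul_eq (hE₀ : E 0 = 1)
    (hE : ∀ k, D * E k = E (k + 1) + q ^ k • (E k * d)) (n : ℕ) :
    D ^ n = ∑ p ∈ antidiagonal n, qBinomial q n p.1 • (E p.1 * d ^ p.2) := by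
  induction n with
  | zero => simp [hE₀]
  | succ n ih =>
    set g : ℕ × ℕ → M := fun p => (qBinomial q n p.1 * q ^ p.1) • (E p.1 * d ^ p.2)
    have hshift : ∑ p ∈ antidiagonal n, g (p.1, p.2 + 1)
        = d ^ (n + 1) + ∑ p ∈ antidiagonal n, g (p.1 + 1, p.2) := by
      have h := (Nat.sum_antidiagonal_succ' (f := g) (n := n)).symm.trans Nat.sum_antidiagonal_succ
      simpa [g, qBinomial_eq_zero_of_lt q n.lt_succ_self, hE₀] using h
    calc D ^ (n + 1)
        = ∑ p ∈ antidiagonal n, qBinomial q n p.1 • (D * E p.1 * d ^ p.2) := by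
          simp only [pow_succ', ih, mul_sum, mul_smul_comm, mul_assoc]
      _ = ∑ p ∈ antidiagonal n, qBinomial q n p.1 • (E (p.1 + 1) * d ^ p.2)
            + ∑ p ∈ antidiagonal n, g (p.1, p.2 + 1) := by
          simp only [g, hE, add_mul, smul_add, sum_add_distrib, smul_mul_assoc, mul_assoc,
            pow_succ', mul_smul]
      _ = ∑ p ∈ antidiagonal (n + 1), qBinomial q (n + 1) p.1 • (E p.1 * d ^ p.2) := by
          rw [hshift, Nat.sum_antidiagonal_succ, add_left_comm, ← sum_add_distrib]
          simp only [g, qBinomial_zero_right, hE₀, one_smul, one_mul, qBinomial_succ_succ,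
            add_smul, mul_comm (q ^ _)]

theorem IsPrimitiveRoot.pow_eq_of_mul_eq {R M : Type*} [CommRing R] [IsDomain R] [Ring M]
    [Algebra R M] {q : R} {N : ℕ} (hq : IsPrimitiveRoot q N) {D d : M} {E : ℕ → M}
    (hE₀ : E 0 = 1) (hE : ∀ k, D * E k = E (k + 1) + q ^ k • (E k * d)) (hd : d ^ N = 0) :
    D ^ N = E N := by
  rw [pow_eq_sum_qBinomial_of_mul_eq hE₀ hE, sum_eq_single (N, 0)]
  · simp
  · rintro ⟨i, j⟩ hij hne
    rw [HasAntidiagonal.mem_antidiagonal] at hij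
    obtain rfl | hi := Nat.eq_zero_or_pos i
    · rw [zero_add] at hij
      rw [hij, hd, mul_zero, smul_zero]
    · rw [hq.qBinomial_eq_zero hi (by grind), zero_smul]
  · simp

end TwistedBinomial

section CovariantDifferential

variable {R 𝒜 H : Type*} [CommRing R] [Ring 𝒜] [Algebra R 𝒜] [AddCommGroup H] [Module R H]
  [Module 𝒜 H] [IsScalarTower R 𝒜 H]

/-- `D^{k-1} A`, extended by `1` at `k = 0` so that `d^n` is the `i = 0` term of the expansion. -/
def covariantCoeff (DA : 𝒜 → 𝒜) (A : 𝒜) : ℕ → 𝒜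
  | 0 => 1
  | k + 1 => DA^[k] A

theorem add_toModuleEnd_mul_toModuleEnd {q : R} {d : H →ₗ[R] H} {dA : 𝒜 → 𝒜} {X : 𝒜} {p : ℕ}
    (hLeib : ∀ Φ : H, d (X • Φ) = dA X • Φ + q ^ p • (X • d Φ)) (A : 𝒜) :
    (d + Module.toModuleEnd R H A) * Module.toModuleEnd R H X
      = Module.toModuleEnd R H (dA X + A * X) + q ^ p • (Module.toModuleEnd R H X * d) := by
  ext Φ
  simp only [Module.End.mul_apply, LinearMap.add_apply, LinearMap.smul_apply,
    Module.toModuleEnd_apply, DistribSMul.toLinearMap_apply, hLeib, add_smul, mul_smul]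
  abel

theorem add_mul_mem_grade_succ {G : ℕ → Set 𝒜} (hGadd : ∀ p, ∀ X ∈ G p, ∀ Y ∈ G p, X + Y ∈ G p)
    (hGmul : ∀ p r, ∀ X ∈ G p, ∀ Y ∈ G r, X * Y ∈ G (p + r)) {dA : 𝒜 → 𝒜}
    (hdeg : ∀ p, ∀ X ∈ G p, dA X ∈ G (p + 1)) {A : 𝒜} (hA : A ∈ G 1) {p : ℕ} {X : 𝒜}
    (hX : X ∈ G p) : dA X + A * X ∈ G (p + 1) :=
  hGadd _ _ (hdeg p X hX) _ (add_comm 1 p ▸ hGmul 1 p A hA X hX)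

end CovariantDifferential

theorem covariant_power_curvature_general
    (q : ℂ) (𝒜 : Type*) [Ring 𝒜] [Algebra ℂ 𝒜]
    (H : Type*) [AddCommGroup H] [Module ℂ H] [Module 𝒜 H] [IsScalarTower ℂ 𝒜 H]
    -- the grading of 𝒜
    (G : ℕ → Set 𝒜)
    (hGadd : ∀ p, ∀ X ∈ G p, ∀ Y ∈ G p, X + Y ∈ G p)
    (hGmul : ∀ p r, ∀ X ∈ G p, ∀ Y ∈ G r, X * Y ∈ G (p + r))
    -- the q-differential on the algebra and on the module
    (dA : 𝒜 →ₗ[ℂ] 𝒜) (hdeg : ∀ p, ∀ X ∈ G p, dA X ∈ G (p + 1))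
    (dH : H →ₗ[ℂ] H)
    (hLeibH : ∀ p, ∀ X ∈ G p, ∀ Φ : H, dH (X • Φ) = dA X • Φ + q ^ p • (X • dH Φ))
    -- the connection one-form and the covariant differentials
    (Acon : 𝒜) (hA : Acon ∈ G 1)
    (D : H → H) (hD : ∀ Φ, D Φ = dH Φ + Acon • Φ)
    (DA : 𝒜 → 𝒜) (hDA : ∀ X, DA X = dA X + Acon * X)
    -- q is a primitive N-th root of unity and d^N = 0 on the module
    (N : ℕ) (hN : 1 ≤ N) (hq : IsPrimitiveRoot q N)
    (hdN : ∀ Φ : H, (⇑dH)^[N] Φ = 0) :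
    ∀ Φ : H, D^[N] Φ = (DA^[N - 1] Acon) • Φ := by
  set ρ := Module.toModuleEnd ℂ (S := 𝒜) H
  have hmem : ∀ k, DA^[k] Acon ∈ G (k + 1) := fun k => by
    induction k with
    | zero => exact hA
    | succ k ih =>
      rw [Function.iterate_succ_apply', hDA]
      exact add_mul_mem_grade_succ hGadd hGmul hdeg hA ih
  have hE : ∀ k, (dH + ρ Acon) * ρ (covariantCoeff DA Acon k)
      = ρ (covariantCoeff DA Acon (k + 1)) + q ^ k • (ρ (covariantCoeff DA Acon k) * dH) := by
    rintro (_ | k)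
    · ext Φ
      simp [covariantCoeff, ρ, add_comm]
    · simpa only [covariantCoeff, Function.iterate_succ_apply', hDA]
        using add_toModuleEnd_mul_toModuleEnd (hLeibH _ _ (hmem k)) Acon
  have hdH : dH ^ N = 0 := LinearMap.ext fun Φ => by rw [Module.End.pow_apply]; exact hdN Φ
  obtain ⟨M, rfl⟩ := Nat.exists_eq_add_of_le' hN
  intro Φ
  rw [show D = ⇑(dH + ρ Acon) from funext hD, ← Module.End.pow_apply,
    hq.pow_eq_of_mul_eq (map_one ρ) hE hdH]
  rfl

/-- in the setting of the covariant `q`-differential `D Φ = d Φ + A Φ`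
(graded algebra `𝒜` acting on a module `H`, `d` obeying the `q`-Leibniz rule), if `q` is
a primitive `N`-th root of unity and `d^N = 0` on the module, then
`D^N Φ = (D^{N−1} A) Φ` for all `Φ`, i.e. `D^N` is multiplication by the curvature. -/
theorem covariant_power_curvature
    (q : ℂ) (𝒜 : Type*) [Ring 𝒜] [Algebra ℂ 𝒜]
    (H : Type*) [AddCommGroup H] [Module ℂ H] [Module 𝒜 H] [IsScalarTower ℂ 𝒜 H]
    -- the grading of 𝒜
    (G : ℕ → Set 𝒜)
    (hGadd : ∀ p, ∀ X ∈ G p, ∀ Y ∈ G p, X + Y ∈ G p)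
    (hGmul : ∀ p r, ∀ X ∈ G p, ∀ Y ∈ G r, X * Y ∈ G (p + r))
    -- the q-differential on the algebra and on the module
    (dA : 𝒜 →ₗ[ℂ] 𝒜) (hdeg : ∀ p, ∀ X ∈ G p, dA X ∈ G (p + 1))
    (dH : H →ₗ[ℂ] H)
    (hLeibA : ∀ p, ∀ X ∈ G p, ∀ Y : 𝒜, dA (X * Y) = dA X * Y + q ^ p • (X * dA Y))
    (hLeibH : ∀ p, ∀ X ∈ G p, ∀ Φ : H, dH (X • Φ) = dA X • Φ + q ^ p • (X • dH Φ))
    -- the connection one-form and the covariant differentials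
    (Acon : 𝒜) (hA : Acon ∈ G 1)
    (D : H → H) (hD : ∀ Φ, D Φ = dH Φ + Acon • Φ)
    (DA : 𝒜 → 𝒜) (hDA : ∀ X, DA X = dA X + Acon * X)
    -- q is a primitive N-th root of unity and d^N = 0 on the module
    (N : ℕ) (hN : 1 ≤ N) (hq : IsPrimitiveRoot q N)
    (hdN : ∀ Φ : H, (⇑dH)^[N] Φ = 0) :
    ∀ Φ : H, D^[N] Φ = (DA^[N - 1] Acon) • Φ :=
  covariant_power_curvature_general q 𝒜 H G hGadd hGmul dA hdeg dH hLeibH Acon hA D hD DA hDA N hN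
    hq hdN
end

section
/- If A = S^{−1} dS is a pure gauge connection (S invertible of degree 0) and d^N = 0 with q a primitive N-th root of unity, then the curvature Ω = D^{N−1} A vanishes, i.e. D^N Φ = 0 for all Φ. -/
/-!
A pure gauge connection is gauge equivalent to the trivial one: by the degree-0 Leibniz rule,
`S (dΦ + S⁻¹(dS) Φ) = d(SΦ)`, so `D = S⁻¹ ∘ d ∘ S` and hence `D^k = S⁻¹ ∘ d^k ∘ S` for every `k`.
Thus `D^N = 0` follows from `d^N = 0`, and `D^{N-1} A = S⁻¹ d^{N-1}(S S⁻¹ dS) = S⁻¹ d^N S = 0`;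
the latter is the same computation in the algebra regarded as a module over itself.
-/

section PureGauge

variable {R M : Type*} [Ring R] [AddCommGroup M] [Module R M]

def covariantDeriv (d : M → M) (a : R) (m : M) : M := d m + a • m

variable {d : M → M} {S Sinv dS : R}

theorem semiconj_smul_covariantDeriv_pure_gauge (hright : S * Sinv = 1)
    (hLeib : ∀ m, d (S • m) = dS • m + S • d m) :
    Function.Semiconj (S • ·) (covariantDeriv d (Sinv * dS)) d := fun m => by
  change S • (d m + (Sinv * dS) • m) = d (S • m)
  rw [smul_add, smul_smul, ← mul_assoc, hright, one_mul, hLeib, add_comm]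

theorem iterate_covariantDeriv_pure_gauge (hleft : Sinv * S = 1) (hright : S * Sinv = 1)
    (hLeib : ∀ m, d (S • m) = dS • m + S • d m) (n : ℕ) (m : M) :
    (covariantDeriv d (Sinv * dS))^[n] m = Sinv • d^[n] (S • m) := by
  rw [← (semiconj_smul_covariantDeriv_pure_gauge hright hLeib).iterate_right n m, smul_smul,
    hleft, one_smul]

end PureGauge

theorem pure_gauge_flat_general
    (q : ℂ) (𝒜 : Type*) [Ring 𝒜] [Algebra ℂ 𝒜]
    (H : Type*) [AddCommGroup H] [Module ℂ H] [Module 𝒜 H]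
    -- the grading of 𝒜
    (G : ℕ → Set 𝒜)
    -- the q-differential on the algebra and on the module
    (dA : 𝒜 →ₗ[ℂ] 𝒜)
    (dH : H →ₗ[ℂ] H)
    (hLeibA : ∀ p, ∀ X ∈ G p, ∀ Y : 𝒜, dA (X * Y) = dA X * Y + q ^ p • (X * dA Y))
    (hLeibH : ∀ p, ∀ X ∈ G p, ∀ Φ : H, dH (X • Φ) = dA X • Φ + q ^ p • (X • dH Φ))
    -- S is an invertible element of degree 0 and A = S⁻¹ d S is the pure gauge connection
    (S Sinv : 𝒜) (hS : S ∈ G 0)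
    (hinv₁ : Sinv * S = 1) (hinv₂ : S * Sinv = 1)
    (Acon : 𝒜) (hAcon : Acon = Sinv * dA S)
    (D : H → H) (hD : ∀ Φ, D Φ = dH Φ + Acon • Φ)
    (DA : 𝒜 → 𝒜) (hDA : ∀ X, DA X = dA X + Acon * X)
    -- q is a primitive N-th root of unity and d^N = 0
    (N : ℕ) (hN : 1 ≤ N)
    (hdNA : ∀ X : 𝒜, (⇑dA)^[N] X = 0)
    (hdNH : ∀ Φ : H, (⇑dH)^[N] Φ = 0) :
    DA^[N - 1] Acon = 0 ∧ ∀ Φ : H, D^[N] Φ = 0 := by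
  have hLeibA₀ : ∀ X, dA (S • X) = dA S • X + S • dA X := by simpa using hLeibA 0 S hS
  have hLeibH₀ : ∀ Φ, dH (S • Φ) = dA S • Φ + S • dH Φ := by simpa using hLeibH 0 S hS
  have hDA_eq : DA = covariantDeriv (⇑dA) Acon := funext hDA
  have hD_eq : D = covariantDeriv (⇑dH) Acon := funext hD
  subst hAcon
  refine ⟨?_, fun Φ => ?_⟩
  · have hSA : S • (Sinv * dA S) = dA S := by rw [smul_eq_mul, ← mul_assoc, hinv₂, one_mul]
    rw [hDA_eq, iterate_covariantDeriv_pure_gauge hinv₁ hinv₂ hLeibA₀, hSA,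
      ← Function.iterate_succ_apply, Nat.succ_eq_add_one, Nat.sub_add_cancel hN, hdNA, smul_zero]
  · rw [hD_eq, iterate_covariantDeriv_pure_gauge hinv₁ hinv₂ hLeibH₀, hdNH, smul_zero]

/-- in the setting of the covariant `q`-differential, if the connection is a
pure gauge, `A = S⁻¹ dS` for an invertible degree-0 element `S`, `q` is a primitive
`N`-th root of unity and `d^N = 0` (on the algebra and on the module), then the curvature
`Ω = D^{N−1} A` vanishes, i.e. `D^N Φ = 0` for all `Φ`. -/
theorem pure_gauge_flat
    (q : ℂ) (𝒜 : Type*) [Ring 𝒜] [Algebra ℂ 𝒜]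
    (H : Type*) [AddCommGroup H] [Module ℂ H] [Module 𝒜 H] [IsScalarTower ℂ 𝒜 H]
    -- the grading of 𝒜
    (G : ℕ → Set 𝒜)
    (hGadd : ∀ p, ∀ X ∈ G p, ∀ Y ∈ G p, X + Y ∈ G p)
    (hGmul : ∀ p r, ∀ X ∈ G p, ∀ Y ∈ G r, X * Y ∈ G (p + r))
    -- the q-differential on the algebra and on the module
    (dA : 𝒜 →ₗ[ℂ] 𝒜) (hdeg : ∀ p, ∀ X ∈ G p, dA X ∈ G (p + 1))
    (dH : H →ₗ[ℂ] H)
    (hLeibA : ∀ p, ∀ X ∈ G p, ∀ Y : 𝒜, dA (X * Y) = dA X * Y + q ^ p • (X * dA Y))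
    (hLeibH : ∀ p, ∀ X ∈ G p, ∀ Φ : H, dH (X • Φ) = dA X • Φ + q ^ p • (X • dH Φ))
    -- S is an invertible element of degree 0 and A = S⁻¹ d S is the pure gauge connection
    (S Sinv : 𝒜) (hS : S ∈ G 0) (hSinv : Sinv ∈ G 0)
    (hinv₁ : Sinv * S = 1) (hinv₂ : S * Sinv = 1)
    (Acon : 𝒜) (hAcon : Acon = Sinv * dA S)
    (D : H → H) (hD : ∀ Φ, D Φ = dH Φ + Acon • Φ)
    (DA : 𝒜 → 𝒜) (hDA : ∀ X, DA X = dA X + Acon * X)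
    -- q is a primitive N-th root of unity and d^N = 0
    (N : ℕ) (hN : 1 ≤ N) (hq : IsPrimitiveRoot q N)
    (hdNA : ∀ X : 𝒜, (⇑dA)^[N] X = 0)
    (hdNH : ∀ Φ : H, (⇑dH)^[N] Φ = 0) :
    DA^[N - 1] Acon = 0 ∧ ∀ Φ : H, D^[N] Φ = 0 :=
  pure_gauge_flat_general q 𝒜 H G dA dH hLeibA hLeibH S Sinv hS hinv₁ hinv₂ Acon hAcon D hD DA hDA N
    hN hdNA hdNH
end

section
/- In the N×N matrix realization with q a primitive N-th root of unity, the pure-gauge connection A = S^{−1} d S constructed from an invertible diagonal matrix S = diag(a_1,…,a_N) has off-diagonal entries α_i = a_{i+1}/a_i − 1 (indices mod N), and the product (α_1+1)(α_2+1)⋯(α_N+1) = 1. Conversely, a connection matrix A with entries α_i on the superdiagonal (and α_N in position (N,1)) satisfies (α_1+1)⋯(α_N+1) = 1 if and only if it is of pure-gauge form A = S^{−1} dS for some invertible diagonal S. -/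
open Matrix

lemma mat_eq_aux (N : ℕ) [NeZero N] (a : Fin N → ℂ) (ha : ∀ i, a i ≠ 0) :
    (Matrix.diagonal fun i => (a i)⁻¹) *
        ((Matrix.of fun i j : Fin N => if j = i + 1 then (1:ℂ) else 0) * Matrix.diagonal a -
          Matrix.diagonal a * Matrix.of fun i j : Fin N => if j = i + 1 then (1:ℂ) else 0) =
      Matrix.of (fun i j => if j = i + 1 then a (i + 1) / a i - 1 else 0) := by
  ext i j
  simp only [Matrix.mul_apply, Matrix.sub_apply, Matrix.diagonal_apply, Matrix.of_apply,
    ite_mul, mul_ite, zero_mul, mul_zero, one_mul, mul_one, Finset.sum_ite_eq,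
    Finset.sum_ite_eq', Finset.mem_univ, if_true, Finset.sum_sub_distrib]
  have hs : (∑ x : Fin N, if j = x + 1 then if i = x then a i else 0 else 0)
      = if j = i + 1 then a i else 0 := by
    rw [Finset.sum_eq_single i]
    · simp
    · intro x _ hx; simp [Ne.symm hx]
    · simp
  rw [hs]
  by_cases h : j = i + 1
  · subst h
    simp only [if_true]
    field_simp [ha i]
  · simp [h]

lemma tele_aux (N : ℕ) [NeZero N] (a : Fin N → ℂ) (ha : ∀ i, a i ≠ 0) :
    ∏ i : Fin N, (a (i + 1) / a i) = 1 := by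
  rw [Finset.prod_div_distrib]
  rw [Fintype.prod_equiv (Equiv.addRight (1 : Fin N)) (fun i => a (i + 1)) a (fun i => rfl)]
  exact div_self (Finset.prod_ne_zero_iff.mpr fun i _ => ha i)

open Fin.NatCast in
lemma ratio_aux (N : ℕ) [NeZero N] (α : Fin N → ℂ) (h1 : ∏ i : Fin N, (α i + 1) = 1) :
    ∃ a : Fin N → ℂ, (∀ i, a i ≠ 0) ∧ ∀ i, a (i + 1) / a i = α i + 1 := by
  have hfac : ∀ i, α i + 1 ≠ 0 := by
    intro i h0
    rw [Finset.prod_eq_zero (Finset.mem_univ i) h0] at h1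
    exact zero_ne_one h1
  refine ⟨fun i => ∏ j ∈ Finset.range i.val, (α (j : Fin N) + 1), ?_, ?_⟩
  · intro i
    exact Finset.prod_ne_zero_iff.mpr fun j _ => hfac _
  · intro i
    have hne : (∏ j ∈ Finset.range i.val, (α (j : Fin N) + 1)) ≠ 0 :=
      Finset.prod_ne_zero_iff.mpr fun j _ => hfac _
    have hval : ((i : Fin N) + 1).val = (i.val + 1) % N := by
      rw [Fin.add_def, Fin.val_one', Nat.add_mod i.val 1 N, Nat.mod_eq_of_lt i.isLt]
    have hcast : ((i.val : ℕ) : Fin N) = i := Fin.cast_val_eq_self i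
    dsimp only
    by_cases hi : i.val + 1 < N
    · have h2 : ((i : Fin N) + 1).val = i.val + 1 := by rw [hval, Nat.mod_eq_of_lt hi]
      rw [h2, Finset.prod_range_succ, hcast]
      field_simp
    · have hN : i.val + 1 = N := by have := i.isLt; omega
      have h2 : ((i : Fin N) + 1).val = 0 := by rw [hval, hN, Nat.mod_self]
      rw [h2]
      simp only [Finset.range_zero, Finset.prod_empty]
      rw [eq_comm, eq_div_iff hne]
      have hstep : (α i + 1) * ∏ j ∈ Finset.range i.val, (α (j : Fin N) + 1)
          = ∏ j ∈ Finset.range (i.val + 1), (α (j : Fin N) + 1) := by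
        rw [Finset.prod_range_succ, hcast]; ring
      rw [hstep, hN, ← Fin.prod_univ_eq_prod_range]
      simpa [Fin.cast_val_eq_self] using h1

/-- in the `N×N` matrix realization (`q` a primitive `N`-th root of unity,
`η` the cyclic shift matrix, `dS = ηS − Sη` for degree-0 `S`), the pure-gauge connection
`A = S⁻¹ dS` built from an invertible diagonal `S = diag(a₁,…,a_N)` has cyclic
superdiagonal entries `α_i = a_{i+1}/a_i − 1` and `(α₁+1)⋯(α_N+1) = 1`; conversely, a
connection matrix with cyclic superdiagonal entries `α_i` satisfies
`(α₁+1)⋯(α_N+1) = 1` iff it is of pure-gauge form `A = S⁻¹ dS` for some invertible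
diagonal `S`. -/
theorem pure_gauge_matrix (N : ℕ) [NeZero N] (q : ℂ) (hq : IsPrimitiveRoot q N) :
    let η : Matrix (Fin N) (Fin N) ℂ := Matrix.of fun i j => if j = i + 1 then 1 else 0
    (∀ a : Fin N → ℂ, (∀ i, a i ≠ 0) →
      (Matrix.diagonal fun i => (a i)⁻¹) *
          (η * Matrix.diagonal a - Matrix.diagonal a * η) =
        Matrix.of (fun i j => if j = i + 1 then a (i + 1) / a i - 1 else 0) ∧
      ∏ i : Fin N, ((a (i + 1) / a i - 1) + 1) = 1) ∧
    (∀ α : Fin N → ℂ,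
      (∏ i : Fin N, (α i + 1)) = 1 ↔
        ∃ a : Fin N → ℂ, (∀ i, a i ≠ 0) ∧
          Matrix.of (fun i j => if j = i + 1 then α i else 0) =
            (Matrix.diagonal fun i => (a i)⁻¹) *
              (η * Matrix.diagonal a - Matrix.diagonal a * η)) := by
  intro η
  constructor
  · intro a ha
    refine ⟨mat_eq_aux N a ha, ?_⟩
    simp only [sub_add_cancel]
    exact tele_aux N a ha
  · intro α
    constructor
    · intro h1
      obtain ⟨a, ha, hrat⟩ := ratio_aux N α h1
      refine ⟨a, ha, ?_⟩
      rw [mat_eq_aux N a ha]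
      ext i j
      by_cases h : j = i + 1
      · simp only [Matrix.of_apply, h, if_true]
        rw [hrat i]; ring
      · simp [h]
    · rintro ⟨a, ha, heq⟩
      rw [mat_eq_aux N a ha] at heq
      have hα : ∀ i, α i = a (i + 1) / a i - 1 := by
        intro i
        have h2 := congrFun (congrFun heq i) (i + 1)
        simpa using h2
      calc ∏ i : Fin N, (α i + 1) = ∏ i : Fin N, (a (i + 1) / a i) := by
            refine Finset.prod_congr rfl fun i _ => ?_
            rw [hα i]; ring
        _ = 1 := tele_aux N a ha
end
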